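/- Let α_I, α_R ≥ 0 with α_S + α_I + α_R = 1, and let v_I : [0,∞) → ℝ be differentiable with v_I(0) = α_I and dv_I/dt = β h_I(θ_t) h_S(θ_t)/h_X(θ_t) − ρ v_I(t) for all t ≥ 0. Define v_R(t) = 1 − v_S(θ_t) − v_I(t). Then for every t ≥ 0, v_R(t) = α_R + α_I (1 − e^{−ρt}) + β ∫_0^t h_I(θ_s) h_S(θ_s)/h_X(θ_s) (1 − e^{−ρ(t−s)}) ds. -/

import Mathlib

open scoped BigOperators
open Real

noncomputable def vS (αS : ℝ) (p : ℕ → ℝ) (θ : ℝ) : ℝ := αS * ∑' k : ℕ, p k * θ ^ k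

noncomputable def hS (αS : ℝ) (p : ℕ → ℝ) (θ : ℝ) : ℝ := αS * ∑' k : ℕ, (k : ℝ) * p k * θ ^ k

noncomputable def hX (μ : ℝ) (θ : ℝ) : ℝ := μ * θ ^ 2

noncomputable def hR (μ μR β ρ : ℝ) (θ : ℝ) : ℝ := μR * θ + μ * ρ / β * (θ * (1 - θ))

noncomputable def hI (αS μ μR β ρ : ℝ) (p : ℕ → ℝ) (θ : ℝ) : ℝ :=
  hX μ θ - hS αS p θ - hR μ μR β ρ θ

noncomputable def F (β ρ t : ℝ) : ℝ := ρ / (β + ρ) + β / (β + ρ) * Real.exp (-(β + ρ) * t)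

/-!
Along the trajectory, `h_S(θ) = θ v_S'(θ)` turns the chain rule into
`d/dt v_S(θ_t) = v_S'(θ_t) θ_t' = -β h_I h_S / h_X (θ_t)`, so `v_S(θ_t) = α_S - β ∫₀ᵗ h_I h_S / h_X`.
The equation for `v_I` is linear, and variation of constants gives
`v_I(t) = e^{-ρt} α_I + β ∫₀ᵗ e^{-ρ(t-s)} h_I h_S / h_X`. Subtracting both from `1` and using
`1 - α_S = α_I + α_R` yields the formula for `v_R`.

The one analytic point is differentiating the generating function `∑ p_k θ^k` at `θ = 1`, beyond
which it need not converge: by convexity of `x ↦ x ^ k` each difference quotient lies between the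
termwise derivatives at its two endpoints, and those series are continuous on `[0, 1]`.
-/

open Set Filter Topology MeasureTheory

lemma ConvexOn.deriv_mul_sub_le_sub {S : Set ℝ} {f : ℝ → ℝ} {f' x y : ℝ} (hf : ConvexOn ℝ S f)
    (hx : x ∈ S) (hy : y ∈ S) (hd : HasDerivAt f f' x) : f' * (y - x) ≤ f y - f x := by
  rcases lt_trichotomy x y with hxy | rfl | hyx
  · have := hf.le_slope_of_hasDerivAt hx hy hxy hd
    rwa [slope_def_field, le_div_iff₀ (sub_pos.2 hxy)] at this
  · simp
  · have := hf.slope_le_of_hasDerivAt hy hx hyx hd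
    rw [slope_def_field, div_le_iff₀ (sub_pos.2 hyx)] at this
    linarith

lemma pow_sub_pow_bounds_of_nonneg {x y : ℝ} (hx : 0 ≤ x) (hy : 0 ≤ y) (k : ℕ) :
    k * x ^ (k - 1) * (y - x) ≤ y ^ k - x ^ k ∧
      y ^ k - x ^ k ≤ k * y ^ (k - 1) * (y - x) := by
  have hd : ∀ z : ℝ, HasDerivAt (· ^ k) (k * z ^ (k - 1)) z := fun z => hasDerivAt_pow k z
  refine ⟨(convexOn_pow k).deriv_mul_sub_le_sub hx hy (hd x), ?_⟩
  have := (convexOn_pow k).deriv_mul_sub_le_sub hy hx (hd y)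
  linarith

lemma hasDerivWithinAt_of_deriv_mul_sub_le_sub {S : Set ℝ} {f f' : ℝ → ℝ} {x : ℝ}
    (hf' : ContinuousWithinAt f' S x)
    (hlow : ∀ y ∈ S, f' x * (y - x) ≤ f y - f x)
    (hhigh : ∀ y ∈ S, f y - f x ≤ f' y * (y - x)) :
    HasDerivWithinAt f (f' x) S x := by
  rw [hasDerivWithinAt_iff_isLittleO, Asymptotics.isLittleO_iff]
  intro c hc
  have hclose : ∀ᶠ y in 𝓝[S] x, |f' y - f' x| ≤ c := by
    filter_upwards [Metric.tendsto_nhds.1 hf' c hc] with y hy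
    exact (Real.dist_eq _ _ ▸ hy).le
  filter_upwards [hclose, self_mem_nhdsWithin] with y hy hyS
  have hrem : |f y - f x - (y - x) • f' x| ≤ |f' y - f' x| * |y - x| := by
    have h0 : 0 ≤ f y - f x - (y - x) * f' x := by linarith [hlow y hyS]
    have h1 : f y - f x - (y - x) * f' x ≤ (f' y - f' x) * (y - x) := by linarith [hhigh y hyS]
    rw [smul_eq_mul, ← abs_mul, abs_of_nonneg h0]
    exact h1.trans (le_abs_self _)
  simpa only [Real.norm_eq_abs] using hrem.trans (mul_le_mul_of_nonneg_right hy (abs_nonneg _))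

lemma norm_mul_pow_le_abs (a : ℝ) (n : ℕ) {x : ℝ} (hx : x ∈ Icc (0 : ℝ) 1) :
    ‖a * x ^ n‖ ≤ |a| := by
  rw [norm_mul, norm_pow, Real.norm_eq_abs, Real.norm_eq_abs, abs_of_nonneg hx.1]
  exact mul_le_of_le_one_right (abs_nonneg a) (pow_le_one₀ hx.1 hx.2)

lemma summable_mul_pow_of_mem_Icc {a : ℕ → ℝ} (ha : Summable a) (e : ℕ → ℕ) {x : ℝ}
    (hx : x ∈ Icc (0 : ℝ) 1) : Summable fun k => a k * x ^ e k :=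
  Summable.of_norm_bounded ha.abs fun k => norm_mul_pow_le_abs (a k) (e k) hx

lemma continuousOn_tsum_mul_pow {a : ℕ → ℝ} (ha : Summable a) (e : ℕ → ℕ) :
    ContinuousOn (fun x => ∑' k, a k * x ^ e k) (Icc 0 1) :=
  continuousOn_tsum (fun k => (continuous_const.mul (continuous_pow (e k))).continuousOn) ha.abs
    fun k _ hx => norm_mul_pow_le_abs (a k) (e k) hx

noncomputable def genFun (p : ℕ → ℝ) (x : ℝ) : ℝ := ∑' k : ℕ, p k * x ^ k

noncomputable def genFunDeriv (p : ℕ → ℝ) (x : ℝ) : ℝ := ∑' k : ℕ, (k : ℝ) * p k * x ^ (k - 1)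

section genFun

variable {p : ℕ → ℝ}

lemma hasDerivWithinAt_genFun (hp : ∀ k, 0 ≤ p k) (hps : Summable p)
    (hms : Summable fun k : ℕ => (k : ℝ) * p k) {x : ℝ} (hx : x ∈ Icc (0 : ℝ) 1) :
    HasDerivWithinAt (genFun p) (genFunDeriv p x) (Icc 0 1) x := by
  have hsum : ∀ z ∈ Icc (0 : ℝ) 1, HasSum (fun k => p k * z ^ k) (genFun p z) :=
    fun z hz => (summable_mul_pow_of_mem_Icc hps (fun k => k) hz).hasSum
  have hsumDeriv : ∀ z ∈ Icc (0 : ℝ) 1, ∀ y : ℝ,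
      HasSum (fun k : ℕ => (k : ℝ) * p k * z ^ (k - 1) * (y - x)) (genFunDeriv p z * (y - x)) :=
    fun z hz y => (summable_mul_pow_of_mem_Icc hms (· - 1) hz).hasSum.mul_right _
  refine hasDerivWithinAt_of_deriv_mul_sub_le_sub
    (continuousOn_tsum_mul_pow hms (· - 1) x hx) (fun y hy => ?_) (fun y hy => ?_)
  · refine hasSum_le (fun k => ?_) (hsumDeriv x hx y) ((hsum y hy).sub (hsum x hx))
    have := mul_le_mul_of_nonneg_left (pow_sub_pow_bounds_of_nonneg hx.1 hy.1 k).1 (hp k)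
    linarith
  · refine hasSum_le (fun k => ?_) ((hsum y hy).sub (hsum x hx)) (hsumDeriv y hy y)
    have := mul_le_mul_of_nonneg_left (pow_sub_pow_bounds_of_nonneg hx.1 hy.1 k).2 (hp k)
    linarith

lemma HasDerivAt.genFun_comp (hp : ∀ k, 0 ≤ p k) (hps : Summable p)
    (hms : Summable fun k : ℕ => (k : ℝ) * p k) {θ : ℝ → ℝ} {θ' s : ℝ}
    (hθ : HasDerivAt θ θ' s) (hmem : ∀ᶠ u in 𝓝 s, θ u ∈ Icc (0 : ℝ) 1) :
    HasDerivAt (fun u => genFun p (θ u)) (genFunDeriv p (θ s) * θ') s :=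
  ((hasDerivWithinAt_genFun hp hps hms hmem.self_of_nhds).comp s
    (hθ.hasDerivWithinAt (s := {u | θ u ∈ Icc 0 1})) fun _ hu => hu).hasDerivAt hmem

end genFun

lemma hS_eq_mul_genFunDeriv (αS : ℝ) (p : ℕ → ℝ) (x : ℝ) :
    hS αS p x = αS * (x * genFunDeriv p x) := by
  rw [hS, genFunDeriv, ← tsum_mul_left (a := x)]
  congr 1
  refine tsum_congr fun k => ?_
  cases k with
  | zero => simp
  | succ n => rw [Nat.add_sub_cancel, pow_succ']; ring

lemma continuousOn_hI_mul_hS_div_hX {αS μ μR β ρ : ℝ} {p : ℕ → ℝ}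
    (hms : Summable fun k : ℕ => (k : ℝ) * p k) (hμ : μ ≠ 0) :
    ContinuousOn (fun x => hI αS μ μR β ρ p x * hS αS p x / hX μ x) (Ioc 0 1) := by
  have hSc : ContinuousOn (hS αS p) (Icc 0 1) := by
    have hD : ContinuousOn (genFunDeriv p) (Icc 0 1) := continuousOn_tsum_mul_pow hms (· - 1)
    exact (continuousOn_const.mul (continuousOn_id.mul hD)).congr
      fun x _ => hS_eq_mul_genFunDeriv αS p x
  have hXc : Continuous (hX μ) := by unfold hX; fun_prop
  have hRc : Continuous (hR μ μR β ρ) := by unfold hR; fun_prop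
  have hIc : ContinuousOn (hI αS μ μR β ρ p) (Icc 0 1) :=
    (hXc.continuousOn.sub hSc).sub hRc.continuousOn
  exact ((hIc.mul hSc).mono Ioc_subset_Icc_self).div hXc.continuousOn
    fun x hx => mul_ne_zero hμ (pow_ne_zero 2 hx.1.ne')

lemma eq_exp_mul_add_integral_of_hasDerivAt {v g : ℝ → ℝ} {ρ t : ℝ} (ht : 0 ≤ t)
    (hg : IntervalIntegrable g volume 0 t)
    (hv : ∀ s ∈ Icc 0 t, HasDerivAt v (g s - ρ * v s) s) :
    v t = exp (-ρ * t) * v 0 + ∫ s in 0..t, exp (-ρ * (t - s)) * g s := by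
  have hderiv : ∀ s ∈ uIcc 0 t,
      HasDerivAt (fun u => exp (ρ * u) * v u) (exp (ρ * s) * g s) s := by
    intro s hs
    rw [uIcc_of_le ht] at hs
    have hexp : HasDerivAt (fun u => exp (ρ * u)) (exp (ρ * s) * ρ) s := by
      simpa using ((hasDerivAt_id s).const_mul ρ).exp
    exact (hexp.mul (hv s hs)).congr_deriv (by ring)
  have hFTC := intervalIntegral.integral_eq_sub_of_hasDerivAt hderiv
    (hg.continuousOn_mul (by fun_prop))
  have hshift : ∫ s in 0..t, exp (-ρ * (t - s)) * g s
      = exp (-ρ * t) * ∫ s in 0..t, exp (ρ * s) * g s := by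
    rw [← intervalIntegral.integral_const_mul]
    refine intervalIntegral.integral_congr fun s _ => ?_
    rw [← mul_assoc, ← exp_add, show -ρ * t + ρ * s = -ρ * (t - s) by ring]
  rw [hshift, hFTC, mul_zero, exp_zero, one_mul, mul_sub, ← mul_assoc, ← exp_add, neg_mul,
    neg_add_cancel, exp_zero, one_mul]
  ring

lemma vS_comp_eq_sub_integral {β μ μR ρ αS t : ℝ} {p : ℕ → ℝ} {θ : ℝ → ℝ}
    (hp : ∀ k, 0 ≤ p k) (hps : Summable p) (hpsum : ∑' k : ℕ, p k = 1)
    (hms : Summable fun k : ℕ => (k : ℝ) * p k) (hθ0 : θ 0 = 1)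
    (hθmem : ∀ s, 0 ≤ s → θ s ∈ Icc (0 : ℝ) 1)
    (hθderiv : ∀ s, 0 ≤ s →
      HasDerivAt θ (-β * θ s * hI αS μ μR β ρ p (θ s) / hX μ (θ s)) s) (ht : 0 ≤ t)
    (hint : IntervalIntegrable
      (fun s => hI αS μ μR β ρ p (θ s) * hS αS p (θ s) / hX μ (θ s)) volume 0 t) :
    vS αS p (θ t) =
      αS - β * ∫ s in 0..t, hI αS μ μR β ρ p (θ s) * hS αS p (θ s) / hX μ (θ s) := by
  have hcont : ContinuousOn (fun u => vS αS p (θ u)) (Icc 0 t) :=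
    continuousOn_const.mul ((continuousOn_tsum_mul_pow hps (fun k => k)).comp
      (fun s hs => (hθderiv s hs.1).continuousAt.continuousWithinAt) fun s hs => hθmem s hs.1)
  have hderiv : ∀ s ∈ Ioo 0 t, HasDerivAt (fun u => vS αS p (θ u))
      (-β * (hI αS μ μR β ρ p (θ s) * hS αS p (θ s) / hX μ (θ s))) s := by
    intro s hs
    have hmem : ∀ᶠ u in 𝓝 s, θ u ∈ Icc (0 : ℝ) 1 := by
      filter_upwards [Ioi_mem_nhds hs.1] with u hu using hθmem u hu.le
    refine (((hθderiv s hs.1.le).genFun_comp hp hps hms hmem).const_mul αS).congr_deriv ?_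
    rw [hS_eq_mul_genFunDeriv]
    ring
  have hFTC := intervalIntegral.integral_eq_sub_of_hasDerivAt_of_le ht hcont hderiv
    (hint.const_mul (-β))
  rw [intervalIntegral.integral_const_mul, hθ0] at hFTC
  have hvS1 : vS αS p 1 = αS := by simp [vS, hpsum]
  linarith

theorem stmt14_general
    (β ρ μ μR αS : ℝ) (p : ℕ → ℝ) (θ : ℝ → ℝ)
    (hμ : 0 < μ)
    (hp : ∀ k, 0 ≤ p k)
    (hpsummable : Summable p)
    (hpsum : ∑' k : ℕ, p k = 1)
    (hmeanSummable : Summable (fun k : ℕ => (k : ℝ) * p k))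
    (hθ0 : θ 0 = 1)
    (hθmem : ∀ t, 0 ≤ t → θ t ∈ Set.Ioc (0 : ℝ) 1)
    (hθderiv : ∀ t, 0 ≤ t →
      HasDerivAt θ (-β * θ t * hI αS μ μR β ρ p (θ t) / hX μ (θ t)) t)
    (αI αR : ℝ)
    (hαsum : αS + αI + αR = 1)
    (vI : ℝ → ℝ)
    (hvI0 : vI 0 = αI)
    (hvIderiv : ∀ t, 0 ≤ t →
      HasDerivAt vI
        (β * hI αS μ μR β ρ p (θ t) * hS αS p (θ t) / hX μ (θ t) - ρ * vI t) t)
    (vR : ℝ → ℝ)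
    (hvR : ∀ t, vR t = 1 - vS αS p (θ t) - vI t)
    (t : ℝ) (ht : 0 ≤ t) :
    vR t = αR + αI * (1 - Real.exp (-ρ * t)) +
      β * ∫ s in (0 : ℝ)..t,
        hI αS μ μR β ρ p (θ s) * hS αS p (θ s) / hX μ (θ s) *
          (1 - Real.exp (-ρ * (t - s))) := by
  set f := fun s => hI αS μ μR β ρ p (θ s) * hS αS p (θ s) / hX μ (θ s)
  have hfc : ContinuousOn f (Icc 0 t) :=
    (continuousOn_hI_mul_hS_div_hX hmeanSummable hμ.ne').comp
      (fun s hs => (hθderiv s hs.1).continuousAt.continuousWithinAt) fun s hs => hθmem s hs.1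
  have hfi : IntervalIntegrable f volume 0 t := hfc.intervalIntegrable_of_Icc ht
  have hvS : vS αS p (θ t) = αS - β * ∫ s in 0..t, f s :=
    vS_comp_eq_sub_integral hp hpsummable hpsum hmeanSummable hθ0
      (fun s hs => Ioc_subset_Icc_self (hθmem s hs)) hθderiv ht hfi
  have hvI := eq_exp_mul_add_integral_of_hasDerivAt (ρ := ρ) ht (hfi.const_mul β) fun s hs =>
    (hvIderiv s hs.1).congr_deriv (by simp only [f]; ring)
  have hsplit : β * ∫ s in 0..t, f s * (1 - exp (-ρ * (t - s)))
      = β * (∫ s in 0..t, f s) - ∫ s in 0..t, exp (-ρ * (t - s)) * (β * f s) := by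
    rw [← intervalIntegral.integral_const_mul, ← intervalIntegral.integral_const_mul,
      ← intervalIntegral.integral_sub (hfi.const_mul β)
        ((hfi.const_mul β).continuousOn_mul (by fun_prop))]
    exact intervalIntegral.integral_congr fun s _ => by ring
  rw [hvR, hvS, hvI, hvI0, hsplit]
  linarith

theorem stmt14
    (β ρ μ μS μI μR αS : ℝ) (p : ℕ → ℝ) (θ : ℝ → ℝ)
    (hβ : 0 < β) (hρ : 0 ≤ ρ) (hμ : 0 < μ)
    (hμS : 0 ≤ μS) (hμI : 0 ≤ μI) (hμR : 0 ≤ μR)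
    (hμsum : μS + μI + μR = μ)
    (hαS : αS ∈ Set.Ioc (0 : ℝ) 1)
    (hp : ∀ k, 0 ≤ p k)
    (hpsummable : Summable p)
    (hpsum : ∑' k : ℕ, p k = 1)
    (hmeanSummable : Summable (fun k : ℕ => (k : ℝ) * p k))
    (hmeanPos : 0 < ∑' k : ℕ, (k : ℝ) * p k)
    (hμSdef : μS = αS * ∑' k : ℕ, (k : ℝ) * p k)
    (hθ0 : θ 0 = 1)
    (hθmem : ∀ t, 0 ≤ t → θ t ∈ Set.Ioc (0 : ℝ) 1)
    (hθderiv : ∀ t, 0 ≤ t →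
      HasDerivAt θ (-β * θ t * hI αS μ μR β ρ p (θ t) / hX μ (θ t)) t)
    (αI αR : ℝ) (hαI : 0 ≤ αI) (hαR : 0 ≤ αR)
    (hαsum : αS + αI + αR = 1)
    (vI : ℝ → ℝ)
    (hvI0 : vI 0 = αI)
    (hvIderiv : ∀ t, 0 ≤ t →
      HasDerivAt vI
        (β * hI αS μ μR β ρ p (θ t) * hS αS p (θ t) / hX μ (θ t) - ρ * vI t) t)
    (vR : ℝ → ℝ)
    (hvR : ∀ t, vR t = 1 - vS αS p (θ t) - vI t)
    (t : ℝ) (ht : 0 ≤ t) :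
    vR t = αR + αI * (1 - Real.exp (-ρ * t)) +
      β * ∫ s in (0 : ℝ)..t,
        hI αS μ μR β ρ p (θ s) * hS αS p (θ s) / hX μ (θ s) *
          (1 - Real.exp (-ρ * (t - s))) :=
  stmt14_general β ρ μ μR αS p θ hμ hp hpsummable hpsum hmeanSummable hθ0 hθmem hθderiv αI αR hαsum
    vI hvI0 hvIderiv vR hvR t ht
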